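/- arXiv:2603.28014 — 2 statements merged into one kernel-verified Lean document; each statement's English description precedes it below -/
import Mathlib

section
/- Let V, χ : (0,∞) → ℝ be absolutely continuous functions satisfying (n/2)V(s) − (s/2)V'(s) = χ(s) − (2/s)χ'(s) for a.e. s > 0, and 0 ≤ χ(s) ≤ (n/2)V(s) for all s > 0, with V(s) > 0. Define P(s) := V(s)/sⁿ − 4χ(s)/s^{n+2} and Q(s) := χ(s)/(s²V(s)). Then for a.e. s > 0, P'(s) = −s^{-1}(2s² − 4n − 8)·(Q(s)/(1 − 4Q(s)))·P(s), provided 4Q(s) ≠ 1. -/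
open Filter

/-!
Differentiating `P = V/sⁿ - 4χ/s^{n+2}` and substituting `s V'` from the ODE, the terms in `χ'`
cancel and `P' = -(2s² - 4n - 8) χ / s^{n+3}`. On the other hand
`Q/(1 - 4Q) = χ/(s²V - 4χ)` and `P = (s²V - 4χ)/s^{n+2}`, so `Q/(1 - 4Q) · P = χ/s^{n+2}`.
-/

theorem hasDerivAt_div_pow {𝕜 : Type*} [NontriviallyNormedField 𝕜] {f : 𝕜 → 𝕜} {f' s : 𝕜}
    (hf : HasDerivAt f f' s) (hs : s ≠ 0) (k : ℕ) :
    HasDerivAt (fun t => f t / t ^ k) ((f' - k * f s / s) / s ^ k) s := by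
  refine (hf.div (hasDerivAt_pow k s) (pow_ne_zero k hs)).congr_deriv ?_
  cases k with
  | zero => simp
  | succ k =>
    simp only [Nat.add_sub_cancel]
    field_simp
    ring

theorem hasDerivAt_normalizedVolumeRatio {n : ℕ} {V χ : ℝ → ℝ} {V' χ' s : ℝ}
    (hV : HasDerivAt V V' s) (hχ : HasDerivAt χ χ' s) (hs : s ≠ 0)
    (hode : (n / 2) * V s - (s / 2) * V' = χ s - (2 / s) * χ') :
    HasDerivAt (fun t => V t / t ^ n - 4 * χ t / t ^ (n + 2))
      (-(2 * s ^ 2 - 4 * n - 8) * χ s / s ^ (n + 3)) s := by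
  refine ((hasDerivAt_div_pow hV hs n).sub
    (hasDerivAt_div_pow (hχ.const_mul 4) hs (n + 2))).congr_deriv ?_
  have hV' : V' = (n * V s - 2 * χ s + 4 * χ' / s) / s := by
    field_simp at hode ⊢
    linarith
  rw [hV']
  field_simp
  push_cast
  ring

theorem div_one_sub_four_mul_mul_normalizedVolumeRatio {n : ℕ} {V χ s : ℝ} (hs : s ≠ 0)
    (hV : V ≠ 0) (hQ : 4 * (χ / (s ^ 2 * V)) ≠ 1) :
    χ / (s ^ 2 * V) / (1 - 4 * (χ / (s ^ 2 * V))) * (V / s ^ n - 4 * χ / s ^ (n + 2)) =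
      χ / s ^ (n + 2) := by
  have hgap : s ^ 2 * V - 4 * χ ≠ 0 := by
    contrapose! hQ
    field_simp
    linarith
  have hone_sub : 1 - 4 * (χ / (s ^ 2 * V)) = (s ^ 2 * V - 4 * χ) / (s ^ 2 * V) := by
    field_simp
  have hratio : V / s ^ n - 4 * χ / s ^ (n + 2) = (s ^ 2 * V - 4 * χ) / s ^ (n + 2) := by
    field_simp
    ring
  rw [hone_sub, div_div_div_cancel_right₀ (mul_ne_zero (pow_ne_zero 2 hs) hV), hratio,
    div_mul_div_cancel₀ hgap]

theorem stmt0_general (n : ℕ) (V χ V' χ' : ℝ → ℝ)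
    (hV : ∀ s > (0:ℝ), HasDerivAt V (V' s) s)
    (hχ : ∀ s > (0:ℝ), HasDerivAt χ (χ' s) s)
    (hode : ∀ s > (0:ℝ), (n / 2) * V s - (s / 2) * V' s = χ s - (2 / s) * χ' s)
    (hVpos : ∀ s > (0:ℝ), 0 < V s)
    (P Q : ℝ → ℝ)
    (hP : ∀ s > (0:ℝ), P s = V s / s ^ n - 4 * χ s / s ^ (n + 2))
    (hQ : ∀ s > (0:ℝ), Q s = χ s / (s ^ 2 * V s)) :
    ∀ s > (0:ℝ), 4 * Q s ≠ 1 →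
      HasDerivAt P (-(s⁻¹ * (2 * s ^ 2 - 4 * n - 8) * (Q s / (1 - 4 * Q s)) * P s)) s := by
  intro s hs hQs
  have hP_eq : P =ᶠ[nhds s] fun t => V t / t ^ n - 4 * χ t / t ^ (n + 2) :=
    eventually_of_mem (Ioi_mem_nhds hs) hP
  have hderiv := hasDerivAt_normalizedVolumeRatio (hV s hs) (hχ s hs) hs.ne' (hode s hs)
  refine (hderiv.congr_of_eventuallyEq hP_eq).congr_deriv ?_
  rw [hQ s hs] at hQs ⊢
  rw [mul_assoc _ (_ / _), hP s hs,
    div_one_sub_four_mul_mul_normalizedVolumeRatio hs.ne' (hVpos s hs).ne' hQs]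
  field_simp
  ring

/-- Lemma 3.2 / eq. (3.4): the derivative identity for the normalized volume ratio
`P(s) = V(s)/sⁿ − 4χ(s)/s^{n+2}` in terms of `Q(s) = χ(s)/(s²V(s))`. -/
theorem stmt0 (n : ℕ) (hn : 1 ≤ n) (V χ V' χ' : ℝ → ℝ)
    (hV : ∀ s > (0:ℝ), HasDerivAt V (V' s) s)
    (hχ : ∀ s > (0:ℝ), HasDerivAt χ (χ' s) s)
    (hode : ∀ s > (0:ℝ), (n / 2) * V s - (s / 2) * V' s = χ s - (2 / s) * χ' s)
    (hχ0 : ∀ s > (0:ℝ), 0 ≤ χ s)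
    (hχV : ∀ s > (0:ℝ), χ s ≤ (n / 2) * V s)
    (hVpos : ∀ s > (0:ℝ), 0 < V s)
    (P Q : ℝ → ℝ)
    (hP : ∀ s > (0:ℝ), P s = V s / s ^ n - 4 * χ s / s ^ (n + 2))
    (hQ : ∀ s > (0:ℝ), Q s = χ s / (s ^ 2 * V s)) :
    ∀ s > (0:ℝ), 4 * Q s ≠ 1 →
      HasDerivAt P (-(s⁻¹ * (2 * s ^ 2 - 4 * n - 8) * (Q s / (1 - 4 * Q s)) * P s)) s :=
  stmt0_general n V χ V' χ' hV hχ hode hVpos P Q hP hQ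
end

section
/- Let (M, g_t)_{t∈[t₁,t₂]} be a complete Ricci flow with |Ric_{g_t}| ≤ K on M×[t₁,t₂] and scalar curvature R ≥ 0. Suppose for each fixed point x the distance distortion estimate B_{g_{t₂}}(x, A) ⊆ B_{g_{t₁}}(x, A + C(K)(t₂−t₁)) holds for all A, and the volume form is pointwise nonincreasing in t (which follows from ∂_t dvol = −R dvol ≤ 0). Then the asymptotic volume ratio is nonincreasing along the flow: AVR(g_{t₁}) ≥ AVR(g_{t₂}), where AVR(g) := lim_{A→∞} |B_g(x,A)|/(ω_n Aⁿ), whenever these limits exist. -/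
open Filter Topology

theorem tendsto_add_const_div_self_pow (c : ℝ) (n : ℕ) :
    Tendsto (fun A : ℝ => ((A + c) / A) ^ n) atTop (𝓝 1) := by
  have h : Tendsto (fun A : ℝ => 1 + c / A) atTop (𝓝 1) := by
    simpa using (tendsto_const_nhds (x := (1 : ℝ))).add
      ((tendsto_const_nhds (x := c)).div_atTop tendsto_id)
  have hratio : Tendsto (fun A : ℝ => (A + c) / A) atTop (𝓝 1) := by
    refine h.congr' ?_
    filter_upwards [eventually_gt_atTop 0] with A hA
    field_simp
  simpa using hratio.pow n

theorem Filter.Tendsto.comp_add_const_div_mul_pow {g : ℝ → ℝ} {ω b : ℝ} {n : ℕ} (c : ℝ)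
    (hg : Tendsto (fun A => g A / (ω * A ^ n)) atTop (𝓝 b)) :
    Tendsto (fun A => g (A + c) / (ω * A ^ n)) atTop (𝓝 b) := by
  have hshift : Tendsto (fun A => g (A + c) / (ω * (A + c) ^ n)) atTop (𝓝 b) :=
    hg.comp (tendsto_atTop_add_const_right atTop c tendsto_id)
  -- `g (A + c) / (ω * A ^ n) = g (A + c) / (ω * (A + c) ^ n) * ((A + c) / A) ^ n` once `A + c ≠ 0`
  have hprod := hshift.mul (tendsto_add_const_div_self_pow c n)
  rw [mul_one] at hprod
  refine hprod.congr' ?_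
  filter_upwards [eventually_gt_atTop (-c)] with A hAc
  have hAc' : (A + c) ^ n ≠ 0 := pow_ne_zero _ (by linarith)
  rw [div_pow, mul_div, div_mul_eq_mul_div, div_div, mul_comm ω, mul_assoc, mul_comm (g _),
    mul_div_mul_left _ _ hAc']

/- `vol₁ A` and `vol₂ A` are the volumes of the `A`-balls about `x` for `g_{t₁}` and `g_{t₂}`;
`hdist` is what the distance distortion estimate and the decay of the volume form give. -/
theorem stmt8_general (n : ℕ) (ω : ℝ) (hω : 0 < ω)
    (t₁ t₂ CK : ℝ)
    (vol₁ vol₂ : ℝ → ℝ)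
    -- distance distortion + monotone volume form:
    (hdist : ∀ A : ℝ, vol₂ A ≤ vol₁ (A + CK * (t₂ - t₁)))
    (AVR₁ AVR₂ : ℝ)
    (h₁ : Tendsto (fun A => vol₁ A / (ω * A ^ n)) atTop (nhds AVR₁))
    (h₂ : Tendsto (fun A => vol₂ A / (ω * A ^ n)) atTop (nhds AVR₂)) :
    AVR₂ ≤ AVR₁ := by
  refine le_of_tendsto_of_tendsto h₂ (h₁.comp_add_const_div_mul_pow (CK * (t₂ - t₁))) ?_
  filter_upwards [eventually_ge_atTop 0] with A hA
  exact div_le_div_of_nonneg_right (hdist A) (by positivity)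

/-- Lemma 4.2 (monotonicity of the asymptotic volume ratio): with
`vol₁ A = |B_{g_{t₁}}(x, A)|_{g_{t₁}}` and `vol₂ A = |B_{g_{t₂}}(x, A)|_{g_{t₂}}`,
Perelman's distance distortion estimate `B_{g_{t₂}}(x,A) ⊆ B_{g_{t₁}}(x, A + C(K)(t₂−t₁))`
combined with the pointwise decay of the volume form (from `R ≥ 0`) gives
`vol₂ A ≤ vol₁ (A + C(K)(t₂−t₁))`; hence `AVR(g_{t₂}) ≤ AVR(g_{t₁})`. -/
theorem stmt8 (n : ℕ) (hn : 1 ≤ n) (ω : ℝ) (hω : 0 < ω)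
    (t₁ t₂ K CK : ℝ) (ht : t₁ ≤ t₂) (hK : 0 ≤ K) (hCK : 0 ≤ CK)
    (vol₁ vol₂ : ℝ → ℝ)
    (hvol₁0 : ∀ A, 0 ≤ vol₁ A) (hvol₂0 : ∀ A, 0 ≤ vol₂ A)
    (hmono₁ : Monotone vol₁)
    -- distance distortion + monotone volume form:
    (hdist : ∀ A : ℝ, vol₂ A ≤ vol₁ (A + CK * (t₂ - t₁)))
    (AVR₁ AVR₂ : ℝ)
    (h₁ : Tendsto (fun A => vol₁ A / (ω * A ^ n)) atTop (nhds AVR₁))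
    (h₂ : Tendsto (fun A => vol₂ A / (ω * A ^ n)) atTop (nhds AVR₂)) :
    AVR₂ ≤ AVR₁ :=
  stmt8_general n ω hω t₁ t₂ CK vol₁ vol₂ hdist AVR₁ AVR₂ h₁ h₂
end
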